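/- arXiv:2601.07406 — 2 statements merged into one kernel-verified Lean document; each statement's English description precedes it below -/
import Mathlib

section
/- For every odd natural number n and every even d with 0 ≤ d < n and 2d ≠ n − 1, there exists a d-regular cograph on n vertices. -/
open SimpleGraph

/-- The join (product) of two graphs: disjoint union plus all cross edges. -/
def gJoin {α β : Type*} (G : SimpleGraph α) (H : SimpleGraph β) : SimpleGraph (α ⊕ β) where
  Adj u v := match u, v with
    | Sum.inl a, Sum.inl b => G.Adj a b
    | Sum.inr a, Sum.inr b => H.Adj a b
    | _, _ => True
  symm := ⟨by rintro (a|a) (b|b) h <;> simp_all <;> exact h.symm⟩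
  loopless := ⟨by
    rintro (a|a) h
    · exact G.irrefl h
    · exact H.irrefl h⟩

/-- `H` is contained in `G` as a (not necessarily induced) subgraph. -/
def Contains {β α : Type*} (H : SimpleGraph β) (G : SimpleGraph α) : Prop :=
  ∃ f : H →g G, Function.Injective f

/-- The complete bipartite graph `K_{s,t}`. -/
def KBip (s t : ℕ) : SimpleGraph (Fin s ⊕ Fin t) := completeBipartiteGraph (Fin s) (Fin t)

/-- A cograph: a graph with no induced path on four vertices. -/
def IsCograph {α : Type*} (G : SimpleGraph α) : Prop :=
  IsEmpty (pathGraph 4 ↪g G)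

/-! Induction on `2d + t` over all `d < t` with `d` or `t` even and `t ≠ 2d + 1`, where `t` is the
number of vertices. If `t ≤ 2d`, complement a `(t - 1 - d)`-regular cograph on `t` vertices.
Otherwise take the disjoint union of `K_{d+1}` with a `d`-regular cograph on `t - d - 1 > d`
vertices, or, when `t - d - 1 = 2d + 1`, of `d`-regular cographs on `d + 2` and `2d` vertices.
Cographs are closed under both operations because `P₄` is connected and self-complementary. -/

variable {α β γ : Type*} {G : SimpleGraph α} {H : SimpleGraph β}

theorem IsCograph.of_embedding (f : G ↪g H) (hH : IsCograph H) : IsCograph G :=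
  ⟨fun g => hH.false (f.comp g)⟩

theorem isCograph_bot : IsCograph (⊥ : SimpleGraph α) :=
  ⟨fun f => (f.map_adj_iff.mpr (by simp [pathGraph_adj] : (pathGraph 4).Adj 0 1)).elim⟩

def pathGraphFourEmbeddingCompl : pathGraph 4 ↪g (pathGraph 4)ᶜ where
  toFun := ![1, 3, 0, 2]
  inj' := by decide
  map_rel_iff' := by simp only [compl_adj, pathGraph_adj]; decide

theorem IsCograph.compl (hG : IsCograph G) : IsCograph Gᶜ := by
  refine ⟨fun f => ?_⟩
  have hG' : IsCograph Gᶜᶜ := (compl_compl G).symm ▸ hG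
  exact hG'.false ((Embedding.complEquiv f).comp pathGraphFourEmbeddingCompl)

theorem SimpleGraph.Preconnected.nonempty_embedding_of_embedding_sum_of_eq_inl {A : SimpleGraph γ}
    (hA : A.Preconnected) (f : A ↪g G ⊕g H) {c : γ} {a : α} (hc : f c = .inl a) :
    Nonempty (A ↪g G) := by
  have hleft : ∀ x, ∃ b, f x = .inl b := by
    intro x
    rcases hfx : f x with b | b
    · exact ⟨b, rfl⟩
    · have hreach : (G ⊕g H).Reachable (.inl a) (.inr b) := hc ▸ hfx ▸ (hA c x).map f.toHom
      exact (not_reachable_sum_inl_inr a b hreach).elim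
  choose g hg using hleft
  refine ⟨⟨⟨g, fun x y hxy => f.injective (by rw [hg, hg, hxy])⟩, ?_⟩⟩
  intro x y
  rw [← f.map_adj_iff, hg, hg]
  exact (sum_adj_inl (H := H)).symm

theorem SimpleGraph.Connected.nonempty_embedding_of_embedding_sum {A : SimpleGraph γ}
    (hA : A.Connected) (f : A ↪g G ⊕g H) : Nonempty (A ↪g G) ∨ Nonempty (A ↪g H) := by
  obtain ⟨c⟩ := hA.nonempty
  rcases hc : f c with a | b
  · exact .inl (hA.preconnected.nonempty_embedding_of_embedding_sum_of_eq_inl f hc)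
  · exact .inr (hA.preconnected.nonempty_embedding_of_embedding_sum_of_eq_inl
      (Iso.sumComm.toEmbedding.comp f) (c := c) (a := b) (by simp [Iso.sumComm, hc]))

theorem IsCograph.sum (hG : IsCograph G) (hH : IsCograph H) : IsCograph (G ⊕g H) := by
  refine ⟨fun f => ?_⟩
  obtain ⟨⟨g⟩⟩ | ⟨⟨h⟩⟩ := (pathGraph_connected 3).nonempty_embedding_of_embedding_sum f
  · exact hG.false g
  · exact hH.false h

theorem natCard_neighborSet_compl [Finite α] (G : SimpleGraph α) (v : α) :
    Nat.card (Gᶜ.neighborSet v) = Nat.card α - 1 - Nat.card (G.neighborSet v) := by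
  classical
  have := Fintype.ofFinite α
  simp only [Nat.card_eq_fintype_card, card_neighborSet_eq_degree, degree_compl]

theorem natCard_neighborSet_sum_inl (a : α) :
    Nat.card ((G ⊕g H).neighborSet (.inl a)) = Nat.card (G.neighborSet a) := by
  rw [neighborSet_sum_inl, Nat.card_image_of_injective Sum.inl_injective]

theorem natCard_neighborSet_sum_inr (b : β) :
    Nat.card ((G ⊕g H).neighborSet (.inr b)) = Nat.card (H.neighborSet b) := by
  rw [neighborSet_sum_inr, Nat.card_image_of_injective Sum.inr_injective]

def HasRegularCograph (d t : ℕ) : Prop :=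
  ∃ G : SimpleGraph (Fin t), IsCograph G ∧ ∀ v, Nat.card (G.neighborSet v) = d

theorem HasRegularCograph.of_equiv {d t : ℕ} (e : α ≃ Fin t) (hG : IsCograph G)
    (hreg : ∀ v, Nat.card (G.neighborSet v) = d) : HasRegularCograph d t := by
  refine ⟨G.map e.toEmbedding, hG.of_embedding (Iso.map e G).symm.toEmbedding, fun v => ?_⟩
  simpa [hreg] using (Nat.card_congr ((Iso.map e G).mapNeighborSet (e.symm v))).symm

theorem hasRegularCograph_zero (t : ℕ) : HasRegularCograph 0 t :=
  ⟨⊥, isCograph_bot, fun v => by simp⟩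

theorem HasRegularCograph.compl {d t : ℕ} (h : HasRegularCograph d t) :
    HasRegularCograph (t - 1 - d) t := by
  obtain ⟨G, hG, hreg⟩ := h
  refine ⟨Gᶜ, hG.compl, fun v => ?_⟩
  rw [natCard_neighborSet_compl, hreg, Nat.card_eq_fintype_card, Fintype.card_fin]

theorem HasRegularCograph.add {d s t : ℕ} (hs : HasRegularCograph d s)
    (ht : HasRegularCograph d t) : HasRegularCograph d (s + t) := by
  obtain ⟨G, hG, hGreg⟩ := hs
  obtain ⟨H, hH, hHreg⟩ := ht
  refine .of_equiv finSumFinEquiv (hG.sum hH) ?_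
  rintro (a | b)
  · rw [natCard_neighborSet_sum_inl, hGreg]
  · rw [natCard_neighborSet_sum_inr, hHreg]

theorem hasRegularCograph_of_lt {d t : ℕ} (hdt : d < t) (hpar : Even d ∨ Even t)
    (hne : t ≠ 2 * d + 1) : HasRegularCograph d t := by
  simp only [Nat.even_iff] at hpar
  rcases Nat.eq_zero_or_pos d with rfl | hd
  · exact hasRegularCograph_zero t
  by_cases hdense : t ≤ 2 * d
  · have hcompl := (hasRegularCograph_of_lt (d := t - 1 - d) (t := t) (by omega)
      (by simp only [Nat.even_iff]; omega) (by omega)).compl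
    rwa [show t - 1 - (t - 1 - d) = d by omega] at hcompl
  by_cases hsplit : t = 3 * d + 2
  · have hsum := (hasRegularCograph_of_lt (d := d) (t := d + 2) (by omega)
      (by simp only [Nat.even_iff]; omega) (by omega)).add
      (hasRegularCograph_of_lt (d := d) (t := 2 * d) (by omega)
      (by simp only [Nat.even_iff]; omega) (by omega))
    rwa [show d + 2 + 2 * d = t by omega] at hsum
  · have hsum := (hasRegularCograph_of_lt (d := d) (t := d + 1) (by omega)
      (by simp only [Nat.even_iff]; omega) (by omega)).add
      (hasRegularCograph_of_lt (d := d) (t := t - (d + 1)) (by omega)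
      (by simp only [Nat.even_iff]; omega) (by omega))
    rwa [show d + 1 + (t - (d + 1)) = t by omega] at hsum
termination_by 2 * d + t

theorem regular_cograph_odd_general (n d : ℕ) (hdeven : Even d) (hd : d < n)
    (hne : 2 * d ≠ n - 1) :
    ∃ G : SimpleGraph (Fin n), IsCograph G ∧ ∀ v : Fin n, Nat.card (G.neighborSet v) = d :=
  hasRegularCograph_of_lt hd (.inl hdeven) (by omega)

theorem regular_cograph_odd (n d : ℕ) (hn : Odd n) (hdeven : Even d) (hd : d < n)
    (hne : 2 * d ≠ n - 1) :
    ∃ G : SimpleGraph (Fin n), IsCograph G ∧ ∀ v : Fin n, Nat.card (G.neighborSet v) = d :=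
  regular_cograph_odd_general n d hdeven hd hne
end

section
/- For any n ≥ 2, every edge-maximal K_{2,2}-free cograph G on n vertices contains a dominating vertex (a vertex adjacent to all other vertices), and the remaining graph G − v has maximum degree at most 1 (i.e., is a matching plus isolated vertices). -/
open SimpleGraph

/-!
A graph is a `K₂,₂`-free cograph iff no walk `a b c d` with `a ≠ c`, `b ≠ d` closes into a
4-cycle or is an induced path. In such a graph a vertex `v` of maximum degree in its component
dominates the component: if `v ~ x ~ y` with `y` not adjacent to `v`, every other neighbour `u`
of `v` is adjacent to `x` (else `u v x y` is an induced `P₄`), so `deg x > deg v`. Two vertices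
with two common neighbours span a `C₄`, so every vertex other than a dominating vertex `v` has at
most one neighbour besides `v`. Finally an extremal graph is connected: if `c` and `d` dominate
different components, deleting the edges at `d` and joining `c` to `d` and its neighbours gains
one edge, and the new component of `c` is again a dominating vertex plus a matching, hence still
a `K₂,₂`-free cograph.
-/

namespace SimpleGraph

variable {V : Type*} {G : SimpleGraph V}

def IsC4P4Free (G : SimpleGraph V) : Prop :=
  ∀ ⦃a b c d : V⦄, G.Adj a b → G.Adj b c → G.Adj c d → a ≠ c → b ≠ d →
    ¬ G.Adj a d ∧ (a ≠ d → G.Adj a c ∨ G.Adj b d)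

theorem isC4P4Free_iff : G.IsC4P4Free ↔ IsCograph G ∧ ¬ Contains (KBip 2 2) G := by
  refine ⟨fun hG => ⟨⟨fun e => ?_⟩, fun ⟨f, hf⟩ => ?_⟩,
    fun ⟨hP4, hC4⟩ a b c d hab hbc hcd hac hbd => ?_⟩
  · have h : ∀ i j : Fin 4, i.val + 1 = j.val → G.Adj (e i) (e j) := fun i j hij =>
      e.map_adj_iff.mpr (pathGraph_adj.mpr (.inl hij))
    have := (hG (h 0 1 rfl) (h 1 2 rfl) (h 2 3 rfl) (by simp) (by simp)).2 (by simp)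
    simp [pathGraph_adj] at this
  · have h : ∀ i j, G.Adj (f (.inl i)) (f (.inr j)) := fun i j => f.map_adj (by simp [KBip])
    exact (hG (h 0 0) (h 1 0).symm (h 1 1) (hf.ne (by simp)) (hf.ne (by simp))).1 (h 0 1)
  have := hab.ne; have := hbc.ne; have := hcd.ne
  have had : ¬ G.Adj a d := fun had => hC4 ⟨⟨Sum.elim ![a, c] ![b, d], by
      rintro (i | i) (j | j) h <;> fin_cases i <;> fin_cases j <;> simp_all [KBip, adj_comm]⟩, by
    have := had.ne
    rintro (i | i) (j | j) h <;> fin_cases i <;> fin_cases j <;> simp_all [eq_comm]⟩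
  refine ⟨had, fun had' => ?_⟩
  by_contra! hind
  refine hP4.false ⟨⟨![a, b, c, d], fun i j h => ?_⟩, fun {i j} => ?_⟩
  · fin_cases i <;> fin_cases j <;> simp_all [eq_comm]
  · change G.Adj (![a, b, c, d] i) (![a, b, c, d] j) ↔ _
    fin_cases i <;> fin_cases j <;> simp_all [pathGraph_adj, adj_comm]

lemma IsC4P4Free.eq_of_adj_of_adj (hG : G.IsC4P4Free) {v w y z : V} (hvw : v ≠ w)
    (hvy : G.Adj v y) (hvz : G.Adj v z) (hwy : G.Adj w y) (hwz : G.Adj w z) : y = z := by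
  by_contra hyz
  exact (hG hwy hvy.symm hvz hvw.symm hyz).1 hwz

def DominatesComponent (G : SimpleGraph V) (v : V) : Prop :=
  ∀ ⦃w⦄, G.Reachable v w → w ≠ v → G.Adj v w

lemma dominatesComponent_of_adj_adj {v : V}
    (h : ∀ ⦃x y⦄, G.Adj v x → G.Adj x y → y ≠ v → G.Adj v y) : G.DominatesComponent v := by
  suffices ∀ ⦃w⦄, G.Reachable v w → w = v ∨ G.Adj v w from
    fun w hw hwv => (this hw).resolve_left hwv
  intro w hw
  rw [reachable_iff_reflTransGen] at hw
  induction hw with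
  | refl => exact .inl rfl
  | tail _ hxy ih =>
    rcases ih with rfl | hvx
    · exact .inr hxy
    · exact or_iff_not_imp_left.mpr (h hvx hxy)

lemma IsC4P4Free.dominatesComponent_of_degree_le [Fintype V] [DecidableRel G.Adj]
    (hG : G.IsC4P4Free) {v : V} (hmax : ∀ w, G.Reachable v w → G.degree w ≤ G.degree v) :
    G.DominatesComponent v := by
  classical
  refine dominatesComponent_of_adj_adj fun x y hvx hxy hyv => ?_
  by_contra hvy
  have hsub : insert v (insert y ((G.neighborFinset v).erase x)) ⊆ G.neighborFinset x := by
    intro u hu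
    simp only [Finset.mem_insert, Finset.mem_erase, mem_neighborFinset] at hu ⊢
    rcases hu with rfl | rfl | ⟨hux, hvu⟩
    · exact hvx.symm
    · exact hxy
    · have huy : u ≠ y := by rintro rfl; exact hvy hvu
      exact (((hG hvu.symm hvx hxy hux hyv.symm).2 huy).resolve_right hvy).symm
  have hx : x ∈ G.neighborFinset v := (mem_neighborFinset _ _ _).mpr hvx
  have hcard := Finset.card_le_card hsub
  rw [Finset.card_insert_of_notMem (by simp [hyv.symm]),
    Finset.card_insert_of_notMem (by simp [hvy]), Finset.card_erase_of_mem hx,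
    card_neighborFinset_eq_degree, card_neighborFinset_eq_degree] at hcard
  have := hmax x hvx.reachable
  have := (G.degree_pos_iff_exists_adj v).mpr ⟨x, hvx⟩
  omega

lemma IsC4P4Free.exists_dominatesComponent [Finite V] (hG : G.IsC4P4Free) (u : V) :
    ∃ v, G.Reachable u v ∧ G.DominatesComponent v := by
  classical
  have := Fintype.ofFinite V
  obtain ⟨v, hv, hmax⟩ :=
    (Finset.univ.filter (G.Reachable u)).exists_max_image (fun w => G.degree w) ⟨u, by simp⟩
  simp only [Finset.mem_filter, Finset.mem_univ, true_and] at hv hmax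
  exact ⟨v, hv, hG.dominatesComponent_of_degree_le fun w hw => hmax w (hv.trans hw)⟩

lemma DominatesComponent.not_adj_and_adj_or_adj {c : V} (hc : G.DominatesComponent c)
    (hmatch : ∀ ⦃x y z⦄, G.Adj c x → G.Adj x y → G.Adj x z → y ≠ c → z ≠ c → y = z)
    {a b e f : V} (ha : G.Reachable c a) (hab : G.Adj a b) (hbe : G.Adj b e) (hef : G.Adj e f)
    (hae : a ≠ e) (hbf : b ≠ f) : ¬ G.Adj a f ∧ (a ≠ f → G.Adj a e ∨ G.Adj b f) := by
  have hb := ha.trans hab.reachable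
  have he := hb.trans hbe.reachable
  have hf := he.trans hef.reachable
  have hcenter : ∀ ⦃x y z⦄, G.Reachable c x → x ≠ c → G.Adj x y → G.Adj x z → y ≠ z →
      y = c ∨ z = c := fun x y z hx hxc hxy hxz hyz => by
    by_contra! h
    exact hyz (hmatch (hc hx hxc) hxy hxz h.1 h.2)
  refine ⟨fun haf => ?_, fun haf => ?_⟩
  · have h1 : a = c ∨ e = c := by
      rcases eq_or_ne b c with rfl | hbc
      · exact (hcenter hf hbf.symm hef.symm haf.symm hae.symm).symm
      · exact hcenter hb hbc hab.symm hbe hae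
    have h2 : b = c ∨ f = c := by
      rcases eq_or_ne a c with rfl | hac
      · exact hcenter he hae.symm hbe.symm hef hbf
      · exact hcenter ha hac hab haf hbf
    grind [hab.ne, hbe.ne, hef.ne, haf.ne]
  · by_cases hbc : b = c
    · exact .inr (hbc ▸ hc hf (hbc ▸ hbf).symm)
    by_cases hec : e = c
    · exact .inl (hec ▸ (hc ha (hec ▸ hae)).symm)
    have := hcenter hb hbc hab.symm hbe hae
    have := hcenter he hec hbe.symm hef hbf
    grind

def moveStar (G : SimpleGraph V) (c d : V) : SimpleGraph V :=
  G.deleteIncidenceSet d ⊔ fromEdgeSet ((fun z => s(c, z)) '' insert d (G.neighborSet d))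

lemma moveStar_adj {c d x y : V} :
    (G.moveStar c d).Adj x y ↔ (G.Adj x y ∧ x ≠ d ∧ y ≠ d) ∨
      (x ≠ y ∧ (x = c ∧ (y = d ∨ G.Adj d y) ∨ y = c ∧ (x = d ∨ G.Adj d x))) := by
  simp only [moveStar, sup_adj, deleteIncidenceSet_adj, fromEdgeSet_adj, Set.mem_image,
    Set.mem_insert_iff, mem_neighborSet, Sym2.eq_iff]
  grind

section moveStar

variable {c d : V}

lemma moveStar_adj_iff_of_ne {x y : V} (hxc : x ≠ c) (hxd : x ≠ d) (hyc : y ≠ c) (hyd : y ≠ d) :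
    (G.moveStar c d).Adj x y ↔ G.Adj x y := by
  simp [moveStar_adj, *]

variable (hcd : ¬G.Reachable c d)
include hcd

lemma eq_of_moveStar_adj {y : V} (h : (G.moveStar c d).Adj d y) : y = c := by
  have : c ≠ d := by rintro rfl; exact hcd .rfl
  grind [moveStar_adj, SimpleGraph.irrefl]

lemma moveStar_adj_left {x : V} :
    (G.moveStar c d).Adj c x ↔ x ≠ c ∧ (G.Adj c x ∨ x = d ∨ G.Adj d x) := by
  have : c ≠ d := by rintro rfl; exact hcd .rfl
  have : G.Adj c x → x ≠ d := fun h hxd => hcd (hxd ▸ h.reachable)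
  grind [moveStar_adj, SimpleGraph.irrefl]

lemma card_edgeSet_moveStar [Finite V] :
    Nat.card (G.moveStar c d).edgeSet = Nat.card G.edgeSet + 1 := by
  classical
  have hc : ∀ z ∈ insert d (G.neighborSet d), ¬G.Reachable c z := by
    rintro z (rfl | hz) hcz
    · exact hcd hcz
    · exact hcd (hcz.trans (hz : G.Adj d z).symm.reachable)
  have hdiag : Disjoint ((fun z => s(c, z)) '' insert d (G.neighborSet d)) Sym2.diagSet := by
    rw [Set.disjoint_left]
    rintro _ ⟨z, hz, rfl⟩
    simpa using fun h : c = z => hc z hz (h ▸ .rfl)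
  have hdisj : Disjoint (G.edgeSet \ G.incidenceSet d)
      ((fun z => s(c, z)) '' insert d (G.neighborSet d)) := by
    rw [Set.disjoint_right]
    rintro _ ⟨z, hz, rfl⟩ h
    exact hc z hz h.1.reachable
  have hinc := Set.ncard_sdiff_add_ncard_of_subset (G.incidenceSet_subset d)
  rw [Set.ncard_congr' (G.incidenceSetEquivNeighborSet d)] at hinc
  rw [moveStar, edgeSet_sup, edgeSet_deleteIncidenceSet, edgeSet_fromEdgeSet,
    hdiag.sdiff_eq_left, Nat.card_coe_set_eq, Nat.card_coe_set_eq, Set.ncard_union_eq hdisj,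
    Set.ncard_image_of_injective _ fun _ _ => Sym2.congr_right.mp,
    Set.ncard_insert_of_notMem G.notMem_neighborSet_self, ← hinc, add_assoc]

variable (hc : G.DominatesComponent c) (hd : G.DominatesComponent d)
include hc hd

lemma exists_center_of_moveStar_adj {x : V} (hcx : (G.moveStar c d).Adj c x) (hxd : x ≠ d) :
    ∃ e, (e = c ∨ e = d) ∧ G.Adj e x ∧
      ∀ ⦃y⦄, (G.moveStar c d).Adj x y → y ≠ c → G.Adj x y ∧ G.Adj e y := by
  have hxc : x ≠ c := hcx.ne.symm
  obtain ⟨e, he, hex⟩ : ∃ e, (e = c ∨ e = d) ∧ G.Adj e x := by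
    rcases ((moveStar_adj_left hcd).mp hcx).2 with h | h | h
    exacts [⟨c, .inl rfl, h⟩, absurd h hxd, ⟨d, .inr rfl, h⟩]
  refine ⟨e, he, hex, fun y hxy hyc => ?_⟩
  have hyd : y ≠ d := by
    rintro rfl
    exact hxc (eq_of_moveStar_adj hcd hxy.symm)
  have hxy' : G.Adj x y := (moveStar_adj_iff_of_ne hxc hxd hyc hyd).mp hxy
  refine ⟨hxy', ?_⟩
  rcases he with rfl | rfl
  exacts [hc (hex.reachable.trans hxy'.reachable) hyc, hd (hex.reachable.trans hxy'.reachable) hyd]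

lemma dominatesComponent_moveStar : (G.moveStar c d).DominatesComponent c := by
  refine dominatesComponent_of_adj_adj fun x y hcx hxy hyc => ?_
  have hxd : x ≠ d := by
    rintro rfl
    exact hyc (eq_of_moveStar_adj hcd hxy)
  obtain ⟨e, he, -, hy⟩ := exists_center_of_moveStar_adj hcd hc hd hcx hxd
  rw [moveStar_adj_left hcd]
  rcases he with rfl | rfl <;> simp [hyc, (hy hxy hyc).2]

lemma eq_of_moveStar_adj_adj (hG : G.IsC4P4Free) {x y z : V} (hcx : (G.moveStar c d).Adj c x)
    (hxy : (G.moveStar c d).Adj x y) (hxz : (G.moveStar c d).Adj x z) (hyc : y ≠ c)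
    (hzc : z ≠ c) : y = z := by
  have hxd : x ≠ d := by
    rintro rfl
    exact hyc (eq_of_moveStar_adj hcd hxy)
  obtain ⟨e, -, hex, h⟩ := exists_center_of_moveStar_adj hcd hc hd hcx hxd
  exact hG.eq_of_adj_of_adj hex.ne (h hxy hyc).2 (h hxz hzc).2 (h hxy hyc).1 (h hxz hzc).1

theorem IsC4P4Free.moveStar (hG : G.IsC4P4Free) : (G.moveStar c d).IsC4P4Free := by
  intro a b e f hab hbe hef hae hbf
  by_cases ha : (G.moveStar c d).Reachable c a
  · exact (dominatesComponent_moveStar hcd hc hd).not_adj_and_adj_or_adj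
      (fun _ _ _ => eq_of_moveStar_adj_adj hcd hc hd hG) ha hab hbe hef hae hbf
  -- away from the component of `c`, which contains `d`, nothing has changed
  have hcd' : (G.moveStar c d).Adj c d :=
    (moveStar_adj_left hcd).mpr ⟨fun h => hcd (h ▸ .rfl), .inr (.inl rfl)⟩
  have hout : ∀ x, (G.moveStar c d).Reachable a x → x ≠ c ∧ x ≠ d := fun x hx =>
    ⟨fun h => ha (h ▸ hx.symm), fun h => ha (hcd'.reachable.trans (h ▸ hx.symm))⟩
  obtain ⟨hac, had⟩ := hout a .rfl
  obtain ⟨hbc, hbd⟩ := hout b hab.reachable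
  obtain ⟨hec, hed⟩ := hout e (hab.reachable.trans hbe.reachable)
  obtain ⟨hfc, hfd⟩ := hout f (hab.reachable.trans hbe.reachable |>.trans hef.reachable)
  simp (disch := assumption) only [moveStar_adj_iff_of_ne] at hab hbe hef ⊢
  exact hG hab hbe hef hae hbf

end moveStar

end SimpleGraph

theorem K22_free_extremal_dominating_vertex {V : Type*} [Fintype V] (G : SimpleGraph V)
    (hcard : 2 ≤ Fintype.card V) (hG : IsCograph G) (hfree : ¬ Contains (KBip 2 2) G)
    (hmax : ∀ H : SimpleGraph V, IsCograph H → ¬ Contains (KBip 2 2) H →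
      Nat.card H.edgeSet ≤ Nat.card G.edgeSet) :
    ∃ v : V, (∀ w : V, w ≠ v → G.Adj v w) ∧
      ∀ w : V, w ≠ v → Nat.card {u : V | u ≠ v ∧ G.Adj w u} ≤ 1 := by
  have hG' : G.IsC4P4Free := isC4P4Free_iff.mpr ⟨hG, hfree⟩
  have hconn : ∀ u w, G.Reachable u w := by
    by_contra! ⟨u, w, huw⟩
    obtain ⟨c, huc, hc⟩ := hG'.exists_dominatesComponent u
    obtain ⟨d, hwd, hd⟩ := hG'.exists_dominatesComponent w
    have hcd : ¬G.Reachable c d := fun h => huw (huc.trans (h.trans hwd.symm))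
    obtain ⟨hH, hHfree⟩ := isC4P4Free_iff.mp (hG'.moveStar hcd hc hd)
    have hle := hmax _ hH hHfree
    rw [card_edgeSet_moveStar hcd] at hle
    omega
  obtain ⟨u⟩ : Nonempty V := Fintype.card_pos_iff.mp (by omega)
  obtain ⟨v, -, hv⟩ := hG'.exists_dominatesComponent u
  refine ⟨v, fun w hw => hv (hconn v w) hw, fun w hw => ?_⟩
  rw [Nat.card_coe_set_eq, Set.ncard_le_one]
  rintro x ⟨hxv, hwx⟩ y ⟨hyv, hwy⟩
  exact hG'.eq_of_adj_of_adj hw.symm (hv (hconn v x) hxv) (hv (hconn v y) hyv) hwx hwy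
end
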